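/- arXiv:1907.13625 — 3 statements merged into one kernel-verified Lean document; each statement's English description precedes it below -/
import Mathlib

section
/- (NWJ/Donsker–Varadhan-type lower bound) For any probability measures P and Q on a finite set and any function f, D_KL(P‖Q) ≥ E_P[f] − e^{−1} E_Q[e^f]. -/
open BigOperators

/-- Kullback–Leibler divergence between two pmfs on a finite set. -/
noncomputable def klDivFin {S : Type*} [Fintype S] (P Q : S → ℝ) : ℝ :=
  ∑ x, P x * Real.log (P x / Q x)

/-! The bound holds summand by summand. For `p > 0` the gap `p t - p log (p / q)` equals
`p log (q eᵗ / p)`, and `log y ≤ y / e` (the tangent line of `log` at `e`) bounds it by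
`e⁻¹ q eᵗ`; for `p = 0` the summand on the left is `-e⁻¹ q eᵗ ≤ 0`. -/

namespace Real

theorem log_le_exp_neg_one_mul {y : ℝ} (hy : 0 < y) : log y ≤ exp (-1) * y := by
  have h := log_le_sub_one_of_pos (mul_pos (exp_pos (-1)) hy)
  rwa [log_mul (exp_pos _).ne' hy.ne', log_exp, neg_add_eq_sub, sub_le_sub_iff_right] at h

theorem mul_sub_exp_neg_one_mul_le_mul_log_div {p q t : ℝ} (hp : 0 ≤ p) (hq : 0 ≤ q)
    (hpq : p ≠ 0 → 0 < q) :
    p * t - exp (-1) * (q * exp t) ≤ p * log (p / q) := by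
  rcases hp.eq_or_lt with rfl | hp
  · simp only [zero_mul, zero_sub, neg_nonpos]
    positivity
  have hq := hpq hp.ne'
  have hgap : p * t - p * log (p / q) = p * log (q * exp t / p) := by
    rw [log_div (mul_pos hq (exp_pos t)).ne' hp.ne', log_mul hq.ne' (exp_pos t).ne',
      log_exp, log_div hp.ne' hq.ne']
    ring
  have hbound : p * log (q * exp t / p) ≤ exp (-1) * (q * exp t) := calc
    p * log (q * exp t / p) ≤ p * (exp (-1) * (q * exp t / p)) :=
      mul_le_mul_of_nonneg_left (log_le_exp_neg_one_mul (by positivity)) hp.le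
    _ = exp (-1) * (q * exp t) := by field_simp
  linarith

end Real

theorem nwj_lower_bound_general {S : Type*} [Fintype S] (P Q : S → ℝ)
    (hP0 : ∀ x, 0 ≤ P x)
    (hQ0 : ∀ x, 0 ≤ Q x)
    (hac : ∀ x, P x ≠ 0 → 0 < Q x) (f : S → ℝ) :
    ∑ x, P x * f x - Real.exp (-1) * ∑ x, Q x * Real.exp (f x) ≤
      klDivFin P Q := by
  rw [klDivFin, Finset.mul_sum, ← Finset.sum_sub_distrib]
  exact Finset.sum_le_sum fun x _ =>
    Real.mul_sub_exp_neg_one_mul_le_mul_log_div (hP0 x) (hQ0 x) (hac x)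

/-- NWJ (Nguyen–Wainwright–Jordan) variational lower bound on the KL
divergence: for any `f`, `D_KL(P‖Q) ≥ E_P[f] − e⁻¹ E_Q[e^f]`. -/
theorem nwj_lower_bound {S : Type*} [Fintype S] (P Q : S → ℝ)
    (hP0 : ∀ x, 0 ≤ P x) (hP1 : ∑ x, P x = 1)
    (hQ0 : ∀ x, 0 ≤ Q x) (hQ1 : ∑ x, Q x = 1)
    (hac : ∀ x, P x ≠ 0 → 0 < Q x) (f : S → ℝ) :
    ∑ x, P x * f x - Real.exp (-1) * ∑ x, Q x * Real.exp (f x) ≤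
      klDivFin P Q :=
  nwj_lower_bound_general P Q hP0 hQ0 hac f
end

section
/- The function f*(x) = 1 + log(dP/dQ)(x) achieves equality in the NWJ bound: E_P[f*] − e^{−1} E_Q[e^{f*}] = D_KL(P‖Q). -/
open BigOperators

theorem mul_exp_log_div_eq {p q : ℝ} (hq : q = 0 → p = 0) (hpos : q ≠ 0 → 0 < p / q) :
    q * Real.exp (Real.log (p / q)) = p := by
  by_cases hq0 : q = 0
  · simp [hq0, hq hq0]
  · rw [Real.exp_log (hpos hq0), mul_div_cancel₀ p hq0]

theorem mul_exp_add_log_div_eq {p q : ℝ} (c : ℝ) (hq : q = 0 → p = 0)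
    (hpos : q ≠ 0 → 0 < p / q) :
    q * Real.exp (c + Real.log (p / q)) = Real.exp c * p := by
  rw [Real.exp_add, mul_left_comm, mul_exp_log_div_eq hq hpos]

theorem nwj_optimal_critic_equality_general {S : Type*} [Fintype S] (P Q : S → ℝ)
    (hP1 : ∑ x, P x = 1)
    (hac : ∀ x, P x ≠ 0 → 0 < Q x)
    (hpos : ∀ x, Q x ≠ 0 → 0 < P x / Q x) :
    ∑ x, P x * (1 + Real.log (P x / Q x)) -
        Real.exp (-1) * ∑ x, Q x * Real.exp (1 + Real.log (P x / Q x)) =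
      klDivFin P Q := by
  have hsupp : ∀ x, Q x = 0 → P x = 0 := fun x hQ =>
    not_not.mp fun hP => (hac x hP).ne' hQ
  have hpartition : ∑ x, Q x * Real.exp (1 + Real.log (P x / Q x)) = Real.exp 1 := by
    simp only [mul_exp_add_log_div_eq 1 (hsupp _) (hpos _), ← Finset.mul_sum, hP1, mul_one]
  have hmean : ∑ x, P x * (1 + Real.log (P x / Q x)) = 1 + klDivFin P Q := by
    simp only [mul_add, mul_one, Finset.sum_add_distrib, hP1, klDivFin]
  rw [hpartition, hmean, ← Real.exp_add, neg_add_cancel, Real.exp_zero]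
  ring

/-- The critic `f*(x) = 1 + log(dP/dQ)(x)` achieves equality in the NWJ bound:
`E_P[f*] − e⁻¹ E_Q[e^{f*}] = D_KL(P‖Q)`. -/
theorem nwj_optimal_critic_equality {S : Type*} [Fintype S] (P Q : S → ℝ)
    (hP0 : ∀ x, 0 ≤ P x) (hP1 : ∑ x, P x = 1)
    (hQ0 : ∀ x, 0 ≤ Q x) (hQ1 : ∑ x, Q x = 1)
    (hac : ∀ x, P x ≠ 0 → 0 < Q x)
    (hpos : ∀ x, Q x ≠ 0 → 0 < P x / Q x) :
    ∑ x, P x * (1 + Real.log (P x / Q x)) -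
        Real.exp (-1) * ∑ x, Q x * Real.exp (1 + Real.log (P x / Q x)) =
      klDivFin P Q :=
  nwj_optimal_critic_equality_general P Q hP1 hac hpos
end

section
/- (InfoNCE is a lower bound on MI under i.i.d. sampling) Let (X_i, Y_i)_{i=1}^K be i.i.d. draws from a joint distribution p(x,y) over finite sets. Then for any critic function f, I(X;Y) ≥ E[ (1/K) Σ_{i=1}^K log( e^{f(x_i,y_i)} / ((1/K) Σ_{j=1}^K e^{f(x_j,y_i)}) ) ]. -/
/-! For each `i`, apply the NWJ bound `E_P[h] ≤ D(P‖Q) + E_Q[e^h] - 1` (the critic `g = 1 + h`)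
to the law `P` of `(X_{1:K}, Y_i)` and the product `Q` of its marginals, with
`h = log (e^{f(X_i,Y_i)} / ((1/K) Σ_j e^{f(X_j,Y_i)}))`. Here `D(P‖Q) = I(X;Y)`, and `Q` does not
depend on `i` while `Σ_i e^h = K` pointwise, so after averaging over `i` the terms `E_Q[e^h] - 1`
cancel. -/

open BigOperators

/-- Marginal on the first coordinate of a joint pmf. -/
noncomputable def fstMarginal {α β : Type*} [Fintype β] (p : α × β → ℝ) (a : α) : ℝ :=
  ∑ b, p (a, b)

/-- Marginal on the second coordinate of a joint pmf. -/
noncomputable def sndMarginal {α β : Type*} [Fintype α] (p : α × β → ℝ) (b : β) : ℝ :=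
  ∑ a, p (a, b)

/-- Mutual information of a joint pmf on a finite product space. -/
noncomputable def mutualInfoP {α β : Type*} [Fintype α] [Fintype β]
    (p : α × β → ℝ) : ℝ :=
  ∑ a, ∑ b, p (a, b) * Real.log (p (a, b) / (fstMarginal p a * sndMarginal p b))

open Finset

lemma Real.mul_le_mul_log_div_add_mul_exp_sub {P Q h : ℝ} (hP : 0 ≤ P) (hQ : 0 ≤ Q)
    (hPQ : 0 < P → 0 < Q) : P * h ≤ P * Real.log (P / Q) + Q * Real.exp h - P := by
  rcases hP.eq_or_lt with rfl | hP
  · simpa using mul_nonneg hQ (Real.exp_pos h).le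
  have hQ := hPQ hP
  have key := Real.log_le_sub_one_of_pos (by positivity : 0 < Q * Real.exp h / P)
  rw [Real.log_div (by positivity) hP.ne', Real.log_mul hQ.ne' (Real.exp_pos h).ne',
    Real.log_exp, le_sub_iff_add_le, le_div_iff₀ hP] at key
  rw [Real.log_div hP.ne' hQ.ne']
  nlinarith

lemma sum_mul_le_sum_mul_log_div_add_sum_mul_exp_sub {γ : Type*} [Fintype γ] {P Q : γ → ℝ}
    (hP : ∀ z, 0 ≤ P z) (hQ : ∀ z, 0 ≤ Q z) (hPQ : ∀ z, 0 < P z → 0 < Q z) (h : γ → ℝ) :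
    ∑ z, P z * h z ≤
      ∑ z, P z * Real.log (P z / Q z) + ∑ z, Q z * Real.exp (h z) - ∑ z, P z := by
  rw [← sum_add_distrib, ← sum_sub_distrib]
  exact sum_le_sum fun z _ =>
    Real.mul_le_mul_log_div_add_mul_exp_sub (hP z) (hQ z) (hPQ z)

lemma Fintype.sum_mul_prod_erase {ι γ R : Type*} [Fintype ι] [DecidableEq ι] [Fintype γ]
    [CommSemiring R] (i : ι) (v : γ → R) (w : ι → γ → R) :
    ∑ x : ι → γ, v (x i) * ∏ j ∈ univ.erase i, w j (x j) =
      (∑ c, v c) * ∏ j ∈ univ.erase i, ∑ c, w j c := by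
  have prod_update (F : ι → (γ → R) → R) :
      ∏ j, F j (Function.update w i v j) = F i v * ∏ j ∈ univ.erase i, F j (w j) := by
    rw [← mul_prod_erase _ _ (mem_univ i), Function.update_self]
    exact congrArg _ (Finset.prod_congr rfl fun j hj => by
      rw [Function.update_of_ne (ne_of_mem_erase hj)])
  rw [← prod_update fun _ u => ∑ c, u c, Fintype.prod_sum]
  exact Finset.sum_congr rfl fun x _ => (prod_update fun j u => u (x j)).symm

lemma sum_div_mul_sum_eq_inv {ι 𝕜 : Type*} [Fintype ι] [Field 𝕜] {a : ι → 𝕜}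
    (ha : ∑ j, a j ≠ 0) (c : 𝕜) : ∑ i, a i / (c * ∑ j, a j) = c⁻¹ := by
  rw [← sum_div, div_mul_cancel_right₀ ha]

lemma le_fstMarginal {α β : Type*} [Fintype β] {p : α × β → ℝ} (hp0 : ∀ z, 0 ≤ p z)
    (z : α × β) : p z ≤ fstMarginal p z.1 :=
  single_le_sum (f := fun b => p (z.1, b)) (fun _ _ => hp0 _) (mem_univ z.2)

lemma le_sndMarginal {α β : Type*} [Fintype α] {p : α × β → ℝ} (hp0 : ∀ z, 0 ≤ p z)
    (z : α × β) : p z ≤ sndMarginal p z.2 :=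
  single_le_sum (f := fun a => p (a, z.2)) (fun _ _ => hp0 _) (mem_univ z.1)

lemma fstMarginal_nonneg {α β : Type*} [Fintype β] {p : α × β → ℝ} (hp0 : ∀ z, 0 ≤ p z)
    (a : α) : 0 ≤ fstMarginal p a :=
  sum_nonneg fun b _ => hp0 (a, b)

lemma sndMarginal_nonneg {α β : Type*} [Fintype α] {p : α × β → ℝ} (hp0 : ∀ z, 0 ≤ p z)
    (b : β) : 0 ≤ sndMarginal p b :=
  sum_nonneg fun a _ => hp0 (a, b)

lemma sum_fstMarginal {α β : Type*} [Fintype α] [Fintype β] (p : α × β → ℝ) :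
    ∑ a, fstMarginal p a = ∑ z, p z :=
  (Fintype.sum_prod_type p).symm

lemma sum_sndMarginal {α β : Type*} [Fintype α] [Fintype β] (p : α × β → ℝ) :
    ∑ b, sndMarginal p b = ∑ z, p z :=
  (Fintype.sum_prod_type_right p).symm

/-- The law of `(X_{1:K}, Y_i)` when the pairs `(X_j, Y_j)` are i.i.d. with law `p`. -/
noncomputable def pairedLaw {ι α β : Type*} [DecidableEq ι] [Fintype ι] [Fintype β]
    (p : α × β → ℝ) (i : ι) (xb : (ι → α) × β) : ℝ :=
  p (xb.1 i, xb.2) * ∏ j ∈ univ.erase i, fstMarginal p (xb.1 j)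

/-- The product of the two marginals of `pairedLaw p i`; it does not depend on `i`. -/
noncomputable def unpairedLaw {ι α β : Type*} [Fintype ι] [Fintype α] [Fintype β]
    (p : α × β → ℝ) (xb : (ι → α) × β) : ℝ :=
  (∏ j, fstMarginal p (xb.1 j)) * sndMarginal p xb.2

lemma pairedLaw_nonneg {ι α β : Type*} [Fintype ι] [DecidableEq ι] [Fintype β]
    {p : α × β → ℝ} (hp0 : ∀ z, 0 ≤ p z) (i : ι) (xb : (ι → α) × β) : 0 ≤ pairedLaw p i xb :=
  mul_nonneg (hp0 _) (prod_nonneg fun _ _ => fstMarginal_nonneg hp0 _)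

lemma unpairedLaw_nonneg {ι α β : Type*} [Fintype ι] [Fintype α] [Fintype β]
    {p : α × β → ℝ} (hp0 : ∀ z, 0 ≤ p z) (xb : (ι → α) × β) : 0 ≤ unpairedLaw p xb :=
  mul_nonneg (prod_nonneg fun _ _ => fstMarginal_nonneg hp0 _) (sndMarginal_nonneg hp0 _)

lemma sum_unpairedLaw {ι α β : Type*} [Fintype ι] [DecidableEq ι] [Fintype α] [Fintype β]
    {p : α × β → ℝ} (hp1 : ∑ z, p z = 1) : ∑ xb : (ι → α) × β, unpairedLaw p xb = 1 := by
  rw [Fintype.sum_prod_type]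
  simp_rw [unpairedLaw, ← mul_sum]
  rw [← sum_mul, ← Fintype.prod_sum (fun _ a => fstMarginal p a), sum_fstMarginal,
    sum_sndMarginal, hp1]
  simp

section PairedLaw

variable {ι α β : Type*} [Fintype ι] [DecidableEq ι] [Fintype α] [Fintype β] {p : α × β → ℝ}

lemma sum_prod_mul_eq_sum_pairedLaw_mul (i : ι) (F : (ι → α) → β → ℝ) :
    ∑ s : ι → α × β, (∏ j, p (s j)) * F (fun j => (s j).1) (s i).2 =
      ∑ xb, pairedLaw p i xb * F xb.1 xb.2 := by
  rw [← (Equiv.arrowProdEquivProdArrow ι (fun _ => α) (fun _ => β)).symm.sum_comp,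
    Fintype.sum_prod_type, Fintype.sum_prod_type]
  refine sum_congr rfl fun x _ => ?_
  calc ∑ y : ι → β, (∏ j, p (x j, y j)) * F x (y i)
      = ∑ y : ι → β, (p (x i, y i) * F x (y i)) * ∏ j ∈ univ.erase i, p (x j, y j) := by
        refine sum_congr rfl fun y _ => ?_
        rw [← mul_prod_erase _ _ (mem_univ i)]
        ring
    _ = (∑ b, p (x i, b) * F x b) * ∏ j ∈ univ.erase i, fstMarginal p (x j) :=
        Fintype.sum_mul_prod_erase i (fun b => p (x i, b) * F x b) fun j b => p (x j, b)
    _ = ∑ b, pairedLaw p i (x, b) * F x b := by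
        rw [sum_mul]
        exact sum_congr rfl fun b _ => by unfold pairedLaw; ring

lemma sum_pairedLaw_mul (hp1 : ∑ z, p z = 1) (i : ι) (φ : α → β → ℝ) :
    ∑ xb, pairedLaw p i xb * φ (xb.1 i) xb.2 = ∑ a, ∑ b, p (a, b) * φ a b := by
  calc ∑ xb, pairedLaw p i xb * φ (xb.1 i) xb.2
      = ∑ x : ι → α, (∑ b, p (x i, b) * φ (x i) b) * ∏ j ∈ univ.erase i, fstMarginal p (x j) := by
        rw [Fintype.sum_prod_type]
        refine sum_congr rfl fun x _ => ?_
        rw [sum_mul]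
        exact sum_congr rfl fun b _ => by unfold pairedLaw; ring
    _ = ∑ a, ∑ b, p (a, b) * φ a b := by
        rw [Fintype.sum_mul_prod_erase i (fun a => ∑ b, p (a, b) * φ a b)]
        simp [sum_fstMarginal p, hp1]

lemma sum_pairedLaw (hp1 : ∑ z, p z = 1) (i : ι) : ∑ xb, pairedLaw p i xb = 1 := by
  simpa [← Fintype.sum_prod_type, hp1] using sum_pairedLaw_mul hp1 i fun _ _ => 1

lemma unpairedLaw_eq_mul (i : ι) (xb : (ι → α) × β) :
    unpairedLaw p xb = fstMarginal p (xb.1 i) * sndMarginal p xb.2 *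
      ∏ j ∈ univ.erase i, fstMarginal p (xb.1 j) := by
  rw [unpairedLaw, ← mul_prod_erase _ _ (mem_univ i)]
  ring

lemma unpairedLaw_pos_of_pairedLaw_pos (hp0 : ∀ z, 0 ≤ p z) {i : ι} {xb : (ι → α) × β}
    (h : 0 < pairedLaw p i xb) : 0 < unpairedLaw p xb := by
  have hp : 0 < p (xb.1 i, xb.2) :=
    pos_of_mul_pos_left h (prod_nonneg fun _ _ => fstMarginal_nonneg hp0 _)
  have hR : 0 < ∏ j ∈ univ.erase i, fstMarginal p (xb.1 j) := pos_of_mul_pos_right h (hp0 _)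
  rw [unpairedLaw_eq_mul i]
  exact mul_pos (mul_pos (hp.trans_le (le_fstMarginal hp0 _))
    (hp.trans_le (le_sndMarginal hp0 _))) hR

lemma sum_pairedLaw_mul_log_div_unpairedLaw (hp0 : ∀ z, 0 ≤ p z) (hp1 : ∑ z, p z = 1) (i : ι) :
    ∑ xb, pairedLaw p i xb * Real.log (pairedLaw p i xb / unpairedLaw p xb) = mutualInfoP p := by
  rw [mutualInfoP, ← sum_pairedLaw_mul hp1 i]
  refine sum_congr rfl fun xb _ => ?_
  rcases (prod_nonneg fun j _ => fstMarginal_nonneg hp0 (xb.1 j) :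
      0 ≤ ∏ j ∈ univ.erase i, fstMarginal p (xb.1 j)).eq_or_lt with hR | hR
  · simp [pairedLaw, ← hR]
  · rw [unpairedLaw_eq_mul i, pairedLaw, mul_div_mul_right _ _ hR.ne']

end PairedLaw

/-- InfoNCE is a lower bound on MI under i.i.d. sampling: for `(Xᵢ, Yᵢ)` i.i.d.
from `p(x,y)` and any critic `f`,
`I(X;Y) ≥ E[(1/K) Σ_i log(e^{f(xᵢ,yᵢ)} / ((1/K) Σ_j e^{f(xⱼ,yᵢ)}))]`. -/
theorem infoNCE_le_mutualInfo {α β : Type*} [Fintype α] [Fintype β]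
    (p : α × β → ℝ) (hp0 : ∀ z, 0 ≤ p z) (hp1 : ∑ z, p z = 1)
    (K : ℕ) (hK : 1 ≤ K) (f : α → β → ℝ) :
    ∑ s : Fin K → α × β, (∏ i, p (s i)) *
        ((1 / (K : ℝ)) * ∑ i : Fin K,
          Real.log (Real.exp (f (s i).1 (s i).2) /
            ((1 / (K : ℝ)) * ∑ j : Fin K, Real.exp (f (s j).1 (s i).2)))) ≤
      mutualInfoP p := by
  have : Nonempty (Fin K) := ⟨⟨0, hK⟩⟩
  set h : Fin K → (Fin K → α) × β → ℝ := fun i xb =>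
    Real.log (Real.exp (f (xb.1 i) xb.2) / ((1 / (K : ℝ)) * ∑ j, Real.exp (f (xb.1 j) xb.2)))
  have sum_exp_h (xb : (Fin K → α) × β) : ∑ i, Real.exp (h i xb) = K := by
    have hpos : 0 < ∑ j, Real.exp (f (xb.1 j) xb.2) := by positivity
    rw [sum_congr rfl fun i _ => Real.exp_log (by positivity), sum_div_mul_sum_eq_inv hpos.ne',
      one_div, inv_inv]
  calc ∑ s : Fin K → α × β, (∏ j, p (s j)) *
          ((1 / (K : ℝ)) * ∑ i, h i (fun j => (s j).1, (s i).2))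
    _ = (1 / (K : ℝ)) * ∑ i, ∑ s : Fin K → α × β,
          (∏ j, p (s j)) * h i (fun j => (s j).1, (s i).2) := by
        simp_rw [mul_sum]
        rw [sum_comm]
        exact sum_congr rfl fun i _ => sum_congr rfl fun s _ => mul_left_comm _ _ _
    _ = (1 / (K : ℝ)) * ∑ i, ∑ xb, pairedLaw p i xb * h i xb := by
        congr 1
        exact sum_congr rfl fun i _ => sum_prod_mul_eq_sum_pairedLaw_mul i fun x b => h i (x, b)
    _ ≤ (1 / (K : ℝ)) * ∑ i,
          (∑ xb, pairedLaw p i xb * Real.log (pairedLaw p i xb / unpairedLaw p xb)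
            + ∑ xb, unpairedLaw p xb * Real.exp (h i xb) - ∑ xb, pairedLaw p i xb) := by
        gcongr with i
        exact sum_mul_le_sum_mul_log_div_add_sum_mul_exp_sub (pairedLaw_nonneg hp0 i)
          (unpairedLaw_nonneg hp0) (fun _ => unpairedLaw_pos_of_pairedLaw_pos hp0) (h i)
    _ = (1 / (K : ℝ)) * ∑ i, (mutualInfoP p + ∑ xb, unpairedLaw p xb * Real.exp (h i xb) - 1) := by
        simp only [sum_pairedLaw_mul_log_div_unpairedLaw hp0 hp1, sum_pairedLaw hp1]
    _ = mutualInfoP p := by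
        rw [sum_sub_distrib, sum_add_distrib, sum_comm]
        simp_rw [← mul_sum, sum_exp_h, ← sum_mul, sum_unpairedLaw hp1]
        simp only [sum_const, card_univ, Fintype.card_fin, nsmul_eq_mul]
        field_simp
        ring
end
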